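/- arXiv:1311.7434 — 4 statements merged into one kernel-verified Lean document; each statement's English description precedes it below -/
import Mathlib

section
/- Let S ∈ SO(3), let M be a real 3×3 skew-symmetric matrix, and let a ∈ ℝ. If the matrix aS + SM has rank at most 1, then a = 0 and M = 0 (hence aS + SM = 0). -/
/-- SO(3): real 3×3 matrices with `RᵀR = RRᵀ = I` and `det R = 1`. -/
def SO3 : Set (Matrix (Fin 3) (Fin 3) ℝ) :=
  {R | R.transpose * R = 1 ∧ R * R.transpose = 1 ∧ R.det = 1}

/-- A real 3×3 matrix is skew-symmetric if `Mᵀ = -M`. -/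
def IsSkew (M : Matrix (Fin 3) (Fin 3) ℝ) : Prop := M.transpose = -M

/-- If a matrix has rank at most one, any two vectors in the range of its
linear map are linearly dependent. -/
lemma pair_dep (A : Matrix (Fin 3) (Fin 3) ℝ) (h : A.rank ≤ 1)
    (x y : Fin 3 → ℝ) (hx : x ∈ LinearMap.range A.mulVecLin)
    (hy : y ∈ LinearMap.range A.mulVecLin) :
    ∃ s t : ℝ, (s ≠ 0 ∨ t ≠ 0) ∧ ∀ i, s * x i + t * y i = 0 := by
  by_contra hc
  push_neg at hc
  have hli : LinearIndependent ℝ ![x, y] := by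
    rw [LinearIndependent.pair_iff]
    intro s t hst
    by_contra h0
    have hor : s ≠ 0 ∨ t ≠ 0 := by tauto
    obtain ⟨i, hi⟩ := hc s t hor
    have : (s • x + t • y) i = 0 := by rw [hst]; rfl
    simp only [Pi.add_apply, Pi.smul_apply, smul_eq_mul] at this
    exact hi this
  have hspan : Submodule.span ℝ (Set.range ![x, y]) ≤ LinearMap.range A.mulVecLin := by
    rw [Submodule.span_le]
    rintro v ⟨i, rfl⟩
    fin_cases i
    · simpa using hx
    · simpa using hy
  have h2 : 2 ≤ A.rank := by
    have hcard := finrank_span_eq_card hli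
    have := Submodule.finrank_mono hspan
    rw [hcard] at this
    simpa [Matrix.rank] using this
  omega

/-- For `S ∈ SO(3)`, `M` skew-symmetric and `a : ℝ`, if `aS + SM` has rank at most 1,
then `a = 0` and `M = 0` (hence `aS + SM = 0`). -/
theorem stmt3 (S M : Matrix (Fin 3) (Fin 3) ℝ) (hS : S ∈ SO3) (hM : IsSkew M) (a : ℝ)
    (hrank : (a • S + S * M).rank ≤ 1) :
    a = 0 ∧ M = 0 ∧ a • S + S * M = 0 := by
  obtain ⟨hS1, hS2, hSdet⟩ := hS
  -- entries of M
  have hskew : ∀ i j, M j i = -(M i j) := by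
    intro i j
    have := congrFun (congrFun hM i) j
    simpa [Matrix.transpose_apply] using this
  have hdiag : ∀ i, M i i = 0 := fun i => by have := hskew i i; linarith
  set A : Matrix (Fin 3) (Fin 3) ℝ := a • 1 + M with hA
  have hfact : a • S + S * M = S * A := by
    rw [hA, Matrix.mul_add, Matrix.mul_smul, Matrix.mul_one]
  have hrankA : A.rank ≤ 1 := by
    rw [hfact, Matrix.rank_mul_eq_right_of_isUnit_det S A (by rw [hSdet]; exact isUnit_one)]
      at hrank
    exact hrank
  -- columns of A
  have hcol : ∀ j : Fin 3, (fun i => A i j) ∈ LinearMap.range A.mulVecLin := by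
    intro j
    exact ⟨Pi.single j 1, by ext i; simp [Matrix.mulVecLin_apply, Matrix.mulVec_single]⟩
  have hAe : ∀ i j, A i j = a * (1 : Matrix (Fin 3) (Fin 3) ℝ) i j + M i j := by
    intro i j; simp [hA]
  -- column 0 vs column 1
  obtain ⟨s, t, hst, heq⟩ := pair_dep A hrankA _ _ (hcol 0) (hcol 1)
  have e00 := heq 0; have e01 := heq 1; have e02 := heq 2
  norm_num [hAe, Matrix.one_apply, hdiag, Fin.ext_iff] at e00 e01 e02
  have hst2 : 0 < s ^ 2 + t ^ 2 := by
    rcases hst with h | h <;> positivity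
  have ha : a = 0 := by
    have key : (s ^ 2 + t ^ 2) * a = 0 := by
      have h1 : s * (s * a + t * M 0 1) + t * (s * (M 1 0) + t * a) = 0 := by
        rw [e00, e01]; ring
      rw [hskew 0 1] at h1
      nlinarith [h1]
    exact by
      rcases mul_eq_zero.mp key with h | h
      · exact absurd h (ne_of_gt hst2)
      · exact h
  have hb : M 0 1 = 0 := by
    rw [ha] at e00 e01
    rw [hskew 0 1] at e01
    rcases hst with h | h
    · have : s * M 0 1 = 0 := by nlinarith [e01]
      exact (mul_eq_zero.mp this).resolve_left h
    · have : t * M 0 1 = 0 := by nlinarith [e00]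
      exact (mul_eq_zero.mp this).resolve_left h
  -- column 0 vs column 2
  obtain ⟨s', t', hst', heq'⟩ := pair_dep A hrankA _ _ (hcol 0) (hcol 2)
  have f00 := heq' 0; have f02 := heq' 2
  norm_num [hAe, Matrix.one_apply, hdiag, Fin.ext_iff] at f00 f02
  rw [ha] at f00 f02
  rw [hskew 0 2] at f02
  have hc : M 0 2 = 0 := by
    rcases hst' with h | h
    · have : s' * M 0 2 = 0 := by nlinarith [f02]
      exact (mul_eq_zero.mp this).resolve_left h
    · have : t' * M 0 2 = 0 := by nlinarith [f00]
      exact (mul_eq_zero.mp this).resolve_left h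
  -- column 1 vs column 2
  obtain ⟨u, v, huv, geq⟩ := pair_dep A hrankA _ _ (hcol 1) (hcol 2)
  have g01 := geq 1; have g02 := geq 2
  norm_num [hAe, Matrix.one_apply, hdiag, Fin.ext_iff] at g01 g02
  rw [ha] at g01 g02
  rw [hskew 1 2] at g02
  have hd : M 1 2 = 0 := by
    rcases huv with h | h
    · have : u * M 1 2 = 0 := by nlinarith [g02]
      exact (mul_eq_zero.mp this).resolve_left h
    · have : v * M 1 2 = 0 := by nlinarith [g01]
      exact (mul_eq_zero.mp this).resolve_left h
  have hM0 : M = 0 := by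
    ext i j
    fin_cases i <;> fin_cases j <;>
      simp [hdiag, hb, hc, hd, hskew 0 1, hskew 0 2, hskew 1 2]
  refine ⟨ha, hM0, ?_⟩
  rw [ha, hM0]
  simp
end

section
/- Let g : ℝ → SE(3) be a trajectory, let ḡ ∈ SE(3) be constant, let σ > 0, let X ∈ ℝ³, and define X̃ = σ(ḡ·X) ∈ ℝ³ and g̃(t) = σ(ḡ g(t)) for all t. Then g̃(t)⁻¹·X̃ = σ(g(t)⁻¹·X) for all t; consequently, for every t such that the third coordinate of g(t)⁻¹·X is nonzero, π(g̃(t)⁻¹·X̃) = π(g(t)⁻¹·X). -/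
/-- An element of SE(3) is (represented by) a pair `(R, T)` of a 3×3 matrix and a vector;
the matrix is constrained to lie in SO(3) via hypotheses. -/
abbrev SE3 := Matrix (Fin 3) (Fin 3) ℝ × (Fin 3 → ℝ)

/-- Composition in SE(3): `g₁ g₂ = (R₁R₂, R₁T₂ + T₁)`. -/
def comp (g₁ g₂ : SE3) : SE3 := (g₁.1 * g₂.1, g₁.1.mulVec g₂.2 + g₁.2)

/-- Identity of SE(3): `(I, 0)`. -/
def idSE3 : SE3 := (1, 0)

/-- Inverse in SE(3): `g⁻¹ = (Rᵀ, -RᵀT)`. -/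
def invSE3 (g : SE3) : SE3 := (g.1.transpose, -(g.1.transpose.mulVec g.2))

/-- Scaling map on SE(3): `σ(g) = (R, σT)`. -/
def scale (σ : ℝ) (g : SE3) : SE3 := (g.1, σ • g.2)

/-- Action of SE(3) on ℝ³: `g·X = RX + T`. -/
def act (g : SE3) (X : Fin 3 → ℝ) : Fin 3 → ℝ := g.1.mulVec X + g.2

/-- Perspective projection `π(X) = (X₁/X₃, X₂/X₃)` (indices 0,1,2 in Lean). -/
noncomputable def proj (X : Fin 3 → ℝ) : ℝ × ℝ := (X 0 / X 2, X 1 / X 2)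

/-- Scaled gauge transformations leave projections unchanged: if `X̃ = σ(ḡ·X)` and
`g̃(t) = σ(ḡ g(t))` with `σ > 0`, then `g̃(t)⁻¹·X̃ = σ (g(t)⁻¹·X)` for all `t`, and hence
the two projections agree wherever the third coordinate of `g(t)⁻¹·X` is nonzero. -/
theorem stmt6 (g : ℝ → SE3) (gbar : SE3) (σ : ℝ) (hσ : 0 < σ)
    (hg : ∀ t, (g t).1 ∈ SO3) (hgbar : gbar.1 ∈ SO3)
    (X : Fin 3 → ℝ) (Xt : Fin 3 → ℝ) (hXt : Xt = σ • act gbar X)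
    (gt : ℝ → SE3) (hgt : ∀ t, gt t = scale σ (comp gbar (g t))) :
    (∀ t, act (invSE3 (gt t)) Xt = σ • act (invSE3 (g t)) X) ∧
    (∀ t, (act (invSE3 (g t)) X) 2 ≠ 0 →
      proj (act (invSE3 (gt t)) Xt) = proj (act (invSE3 (g t)) X)) := by
  have key : ∀ t, act (invSE3 (gt t)) Xt = σ • act (invSE3 (g t)) X := by
    intro t
    obtain ⟨hb1, -, -⟩ := hgbar
    simp only [hgt, hXt, act, invSE3, scale, comp, Matrix.transpose_mul]
    simp only [Matrix.mulVec_add, Matrix.mulVec_smul, ← Matrix.mulVec_mulVec,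
      Matrix.smul_mulVec]
    have hcancel : ∀ v : Fin 3 → ℝ,
        (g t).1.transpose.mulVec (gbar.1.transpose.mulVec (gbar.1.mulVec v))
          = (g t).1.transpose.mulVec v := by
      intro v
      rw [Matrix.mulVec_mulVec, Matrix.mulVec_mulVec, Matrix.mul_assoc, hb1, mul_one]
    funext i
    simp only [act, Matrix.mulVec_add, Pi.add_apply, Pi.neg_apply, Pi.smul_apply,
      smul_eq_mul, hcancel]
    ring
  refine ⟨key, fun t ht => ?_⟩
  rw [key t]
  have hσ' := hσ.ne'
  simp [proj, Pi.smul_apply, smul_eq_mul, mul_div_mul_left _ _ hσ']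
end

section
/- Let R ∈ SO(3) and A = I − R. Let f : ℝ → ℝ³ be bounded on a nonempty set I ⊆ [0,∞). Then sup_{t∈I} ‖A f(t)‖ ≥ ‖A‖ · m(f:I). -/
open scoped RealInnerProductSpace

/-- Minimum excitation `m(f:I)`: infimum over unit vectors `x` of `sup_{t∈I} |f(t)·x|`. -/
noncomputable def mEx (f : ℝ → EuclideanSpace ℝ (Fin 3)) (I : Set ℝ) : ℝ :=
  ⨅ x : {x : EuclideanSpace ℝ (Fin 3) // ‖x‖ = 1}, ⨆ t : I, |⟪f t, (x : EuclideanSpace ℝ (Fin 3))⟫|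

/-- Maximum excitation `M(f:I) = sup_{t∈I} ‖f(t)‖`. -/
noncomputable def MEx (f : ℝ → EuclideanSpace ℝ (Fin 3)) (I : Set ℝ) : ℝ :=
  ⨆ t : I, ‖f t‖

/-- `m̄(f:I) = √(max{0, 2 m(f:I)² − M(f:I)²})`. -/
noncomputable def mbarEx (f : ℝ → EuclideanSpace ℝ (Fin 3)) (I : Set ℝ) : ℝ :=
  Real.sqrt (max 0 (2 * mEx f I ^ 2 - MEx f I ^ 2))

/-- Operator norm of a 3×3 real matrix induced by the Euclidean norm on ℝ³. -/
noncomputable def opNorm3 (A : Matrix (Fin 3) (Fin 3) ℝ) : ℝ :=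
  ‖LinearMap.toContinuousLinearMap (Matrix.toEuclideanLin A)‖

/- ############ auxiliary material ############ -/

/-- Cayley–Hamilton style identity for 3×3 matrices. -/
lemma adj_eq3' (A : Matrix (Fin 3) (Fin 3) ℝ) :
    A.adjugate = A * A - A.trace • A + A.adjugate.trace • (1 : Matrix (Fin 3) (Fin 3) ℝ) := by
  ext i j
  fin_cases i <;> fin_cases j <;>
    simp [Matrix.adjugate_fin_three, Matrix.mul_apply, Fin.sum_univ_three,
      Matrix.trace_fin_three, Matrix.one_apply] <;> ring

noncomputable def T3' (A : Matrix (Fin 3) (Fin 3) ℝ) :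
    EuclideanSpace ℝ (Fin 3) →ₗ[ℝ] EuclideanSpace ℝ (Fin 3) := Matrix.toEuclideanLin A

lemma so3_key' (R : Matrix (Fin 3) (Fin 3) ℝ) (h1 : R.transpose * R = 1)
    (h2 : R * R.transpose = 1) (h3 : R.det = 1) :
    ∃ u : EuclideanSpace ℝ (Fin 3), ‖u‖ = 1 ∧
      (∀ x, ‖T3' (1 - R) x‖ ≤ Real.sqrt (3 - R.trace) * ‖x‖) ∧
      (∀ x, Real.sqrt (3 - R.trace) * |⟪x, u⟫| ≤ ‖T3' (1 - R) x‖) := by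
  -- toolkit
  have Tmul : ∀ (A B : Matrix (Fin 3) (Fin 3) ℝ) (x : EuclideanSpace ℝ (Fin 3)),
      T3' (A * B) x = T3' A (T3' B x) := by
    intro A B x
    simp [T3', Matrix.toEuclideanLin_apply, Matrix.mulVec_mulVec]
  have Tone : ∀ (x : EuclideanSpace ℝ (Fin 3)), T3' 1 x = x := by
    intro x; simp [T3', Matrix.toEuclideanLin_apply]
  have Tzero : ∀ (x : EuclideanSpace ℝ (Fin 3)), T3' 0 x = 0 := by
    intro x; simp [T3']
  have Tadjt : ∀ (A : Matrix (Fin 3) (Fin 3) ℝ) (x y : EuclideanSpace ℝ (Fin 3)),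
      ⟪T3' A.transpose x, y⟫ = ⟪x, T3' A y⟫ := by
    intro A x y
    have h : A.transpose = A.conjTranspose := (Matrix.conjTranspose_eq_transpose_of_trivial A).symm
    rw [T3', h, Matrix.toEuclideanLin_conjTranspose_eq_adjoint]
    exact LinearMap.adjoint_inner_left _ _ _
  have Tsmul : ∀ (a : ℝ) (A : Matrix (Fin 3) (Fin 3) ℝ) (x : EuclideanSpace ℝ (Fin 3)),
      T3' (a • A) x = a • T3' A x := by
    intro a A x; simp [T3']
  have Tsub : ∀ (A B : Matrix (Fin 3) (Fin 3) ℝ) (x : EuclideanSpace ℝ (Fin 3)),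
      T3' (A - B) x = T3' A x - T3' B x := by
    intro A B x; simp [T3']
  have Tadd : ∀ (A B : Matrix (Fin 3) (Fin 3) ℝ) (x : EuclideanSpace ℝ (Fin 3)),
      T3' (A + B) x = T3' A x + T3' B x := by
    intro A B x; simp [T3']
  -- matrix algebra
  set t : ℝ := R.trace with ht
  clear_value t
  have hadj : R.adjugate = R.transpose := by
    have hmul : R * R.adjugate = 1 := by rw [Matrix.mul_adjugate, h3, one_smul]
    calc R.adjugate = (R.transpose * R) * R.adjugate := by rw [h1, one_mul]
    _ = R.transpose * (R * R.adjugate) := by rw [Matrix.mul_assoc]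
    _ = R.transpose := by rw [hmul, mul_one]
  have hQ : R.transpose = R * R - t • R + t • (1 : Matrix (Fin 3) (Fin 3) ℝ) := by
    have := adj_eq3' R
    rw [hadj, Matrix.trace_transpose] at this
    rw [ht]
    exact this
  set M : Matrix (Fin 3) (Fin 3) ℝ := R + R.transpose - (t - 1) • 1 with hM
  have hRR : R * R = R.transpose + t • R - t • (1 : Matrix (Fin 3) (Fin 3) ℝ) := by
    rw [hQ]; abel
  have hTT : R.transpose * R.transpose
      = R + t • R.transpose - t • (1 : Matrix (Fin 3) (Fin 3) ℝ) := by
    have := congrArg Matrix.transpose hRR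
    simpa [Matrix.transpose_mul] using this
  have hMsq : M * M = (3 - t) • M := by
    have expand : M * M = R * R + R * R.transpose + R.transpose * R + R.transpose * R.transpose
        - (t-1) • R - (t-1) • R.transpose - (t-1) • R - (t-1) • R.transpose
        + ((t-1) * (t-1)) • (1 : Matrix (Fin 3) (Fin 3) ℝ) := by
      rw [hM]
      simp only [sub_mul, mul_sub, add_mul, mul_add, Matrix.smul_mul, Matrix.mul_smul,
        one_mul, mul_one, smul_smul]
      abel
    rw [expand, hRR, hTT, h1, h2, hM]
    module
  have hMsym : M.transpose = M := by
    rw [hM]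
    simp [Matrix.transpose_add, Matrix.transpose_smul, Matrix.transpose_one]
    abel
  clear_value M
  -- quadratic form identity
  have hId : ∀ x : EuclideanSpace ℝ (Fin 3),
      ‖T3' (1 - R) x‖ ^ 2 = (3 - t) * ‖x‖ ^ 2 - ⟪x, T3' M x⟫ := by
    intro x
    have hx1 : ⟪T3' R x, T3' R x⟫ = ‖x‖ ^ 2 := by
      calc ⟪T3' R x, T3' R x⟫ = ⟪T3' R.transpose (T3' R x), x⟫ := (Tadjt R (T3' R x) x).symm
      _ = ⟪T3' (R.transpose * R) x, x⟫ := by rw [Tmul]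
      _ = ⟪x, x⟫ := by rw [h1, Tone]
      _ = ‖x‖ ^ 2 := real_inner_self_eq_norm_sq x
    have hsymx : ⟪x, T3' R.transpose x⟫ = ⟪x, T3' R x⟫ := by
      calc ⟪x, T3' R.transpose x⟫ = ⟪T3' R.transpose x, x⟫ := real_inner_comm _ _
      _ = ⟪x, T3' R x⟫ := Tadjt R x x
    have hMx : ⟪x, T3' M x⟫ = 2 * ⟪x, T3' R x⟫ - (t - 1) * ‖x‖ ^ 2 := by
      have e : T3' M x = T3' R x + T3' R.transpose x - (t - 1) • x := by
        rw [hM, Tsub, Tadd, Tsmul, Tone]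
      rw [e, inner_sub_right, inner_add_right, real_inner_smul_right,
        real_inner_self_eq_norm_sq, hsymx]
      ring
    have e : T3' (1 - R) x = x - T3' R x := by rw [Tsub, Tone]
    have hns : ‖x - T3' R x‖ ^ 2 = ‖x‖ ^ 2 - 2 * ⟪x, T3' R x⟫ + ‖T3' R x‖ ^ 2 :=
      norm_sub_sq_real x (T3' R x)
    have hRx : ‖T3' R x‖ ^ 2 = ‖x‖ ^ 2 := by
      rw [← real_inner_self_eq_norm_sq, hx1]
    rw [e, hns, hRx, hMx]; ring
  by_cases hK0 : (3 : ℝ) - t = 0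
  · -- degenerate case : A = 0
    have hM0 : M = 0 := by
      have : M.conjTranspose * M = 0 := by
        rw [Matrix.conjTranspose_eq_transpose_of_trivial, hMsym, hMsq, hK0, zero_smul]
      exact Matrix.conjTranspose_mul_self_eq_zero.mp this
    have hzero : ∀ x : EuclideanSpace ℝ (Fin 3), ‖T3' (1 - R) x‖ = 0 := by
      intro x
      have h := hId x
      rw [hK0, hM0, zero_mul, Tzero, inner_zero_right, sub_zero] at h
      simpa using h
    refine ⟨EuclideanSpace.single 0 1, by simp [EuclideanSpace.norm_single], ?_, ?_⟩
    · intro x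
      rw [hzero x]
      positivity
    · intro x
      rw [hK0, Real.sqrt_zero, zero_mul]
      exact norm_nonneg _
  · -- nondegenerate case
    have hKnn : (0:ℝ) ≤ 3 - t := by
      have c0 := congrFun (congrFun h1 0) 0
      have c1 := congrFun (congrFun h1 1) 1
      have c2 := congrFun (congrFun h1 2) 2
      simp [Matrix.mul_apply, Matrix.transpose_apply, Fin.sum_univ_three,
        Matrix.one_apply] at c0 c1 c2
      rw [ht, Matrix.trace_fin_three]
      nlinarith [sq_nonneg (R 0 0 - 1), sq_nonneg (R 1 1 - 1), sq_nonneg (R 2 2 - 1),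
        sq_nonneg (R 1 0), sq_nonneg (R 2 0), sq_nonneg (R 0 1), sq_nonneg (R 2 1),
        sq_nonneg (R 0 2), sq_nonneg (R 1 2)]
    have hKpos : (0:ℝ) < 3 - t := lt_of_le_of_ne hKnn (Ne.symm hK0)
    set P : Matrix (Fin 3) (Fin 3) ℝ := (3 - t)⁻¹ • M with hP
    have hMP : M = (3 - t) • P := by
      rw [hP, smul_smul, mul_inv_cancel₀ hK0, one_smul]
    have hPsym : P.transpose = P := by rw [hP, Matrix.transpose_smul, hMsym]
    have hP2 : P * P = P := by
      rw [hP, Matrix.smul_mul, Matrix.mul_smul, hMsq, smul_smul, smul_smul]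
      rw [mul_assoc, inv_mul_cancel₀ hK0, mul_one]
    clear_value P
    set Q : Matrix (Fin 3) (Fin 3) ℝ := 1 - P with hQdef
    have hQ2 : Q * Q = Q := by
      simp only [hQdef, sub_mul, mul_sub, one_mul, mul_one, hP2]
      abel
    have hQsym : Q.transpose = Q := by
      rw [hQdef, Matrix.transpose_sub, Matrix.transpose_one, hPsym]
    have hQtr : Q.trace = 2 := by
      have htrM : M.trace = 3 - t := by
        rw [hM]
        simp [Matrix.trace_add, Matrix.trace_sub, Matrix.trace_smul, Matrix.trace_one,
          Matrix.trace_transpose, ← ht]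
        ring
      rw [hQdef, Matrix.trace_sub, Matrix.trace_one, hP, Matrix.trace_smul, htrM]
      simp [smul_eq_mul]
      rw [inv_mul_cancel₀ hK0]
      norm_num
    have hQne : Q ≠ 0 := by
      intro h
      rw [h, Matrix.trace_zero] at hQtr
      norm_num at hQtr
    clear_value Q
    have hTQne : T3' Q ≠ 0 := by
      intro h
      exact hQne (Matrix.toEuclideanLin.map_eq_zero_iff.mp h)
    obtain ⟨y, hy⟩ : ∃ y, T3' Q y ≠ 0 := by
      by_contra hcon
      push_neg at hcon
      exact hTQne (LinearMap.ext fun y => hcon y)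
    set w : EuclideanSpace ℝ (Fin 3) := T3' Q y with hw
    clear_value w
    have hwne : ‖w‖ ≠ 0 := norm_ne_zero_iff.mpr hy
    set u : EuclideanSpace ℝ (Fin 3) := ‖w‖⁻¹ • w with hu
    clear_value u
    have hun : ‖u‖ = 1 := by
      rw [hu, norm_smul, norm_inv, norm_norm, inv_mul_cancel₀ hwne]
    have hQw : T3' Q w = w := by
      rw [hw, ← Tmul, hQ2]
    have hQu : T3' Q u = u := by
      rw [hu, map_smul, hQw]
    -- pointwise computations
    have hpyth : ∀ x : EuclideanSpace ℝ (Fin 3),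
        ‖x‖ ^ 2 = ‖T3' P x‖ ^ 2 + ‖T3' Q x‖ ^ 2 := by
      intro x
      have hdecomp : x = T3' P x + T3' Q x := by
        rw [← Tadd, hQdef]
        rw [show P + (1 - P) = (1 : Matrix (Fin 3) (Fin 3) ℝ) by abel, Tone]
      have horth : ⟪T3' P x, T3' Q x⟫ = (0:ℝ) := by
        calc ⟪T3' P x, T3' Q x⟫ = ⟪T3' P.transpose x, T3' Q x⟫ := by rw [hPsym]
        _ = ⟪x, T3' P (T3' Q x)⟫ := Tadjt P x (T3' Q x)
        _ = ⟪x, T3' (P * Q) x⟫ := by rw [Tmul]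
        _ = 0 := by
            rw [show P * Q = (0 : Matrix (Fin 3) (Fin 3) ℝ) by
              rw [hQdef, mul_sub, mul_one, hP2]; abel]
            rw [Tzero, inner_zero_right]
      calc ‖x‖ ^ 2 = ‖T3' P x + T3' Q x‖ ^ 2 := by rw [← hdecomp]
      _ = ‖T3' P x‖ ^ 2 + 2 * ⟪T3' P x, T3' Q x⟫ + ‖T3' Q x‖ ^ 2 :=
          norm_add_sq_real _ _
      _ = ‖T3' P x‖ ^ 2 + ‖T3' Q x‖ ^ 2 := by rw [horth]; ring
    have hMval : ∀ x : EuclideanSpace ℝ (Fin 3),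
        ⟪x, T3' M x⟫ = (3 - t) * ‖T3' P x‖ ^ 2 := by
      intro x
      have hPP : ⟪x, T3' P x⟫ = ‖T3' P x‖ ^ 2 := by
        calc ⟪x, T3' P x⟫ = ⟪x, T3' (P * P) x⟫ := by rw [hP2]
        _ = ⟪x, T3' P (T3' P x)⟫ := by rw [Tmul]
        _ = ⟪T3' P.transpose x, T3' P x⟫ := (Tadjt P x (T3' P x)).symm
        _ = ⟪T3' P x, T3' P x⟫ := by rw [hPsym]
        _ = ‖T3' P x‖ ^ 2 := real_inner_self_eq_norm_sq _
      rw [hMP, Tsmul, real_inner_smul_right, hPP]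
    have hnormA : ∀ x : EuclideanSpace ℝ (Fin 3),
        ‖T3' (1 - R) x‖ = Real.sqrt (3 - t) * ‖T3' Q x‖ := by
      intro x
      have hsq : ‖T3' (1 - R) x‖ ^ 2 = (3 - t) * ‖T3' Q x‖ ^ 2 := by
        rw [hId x, hMval x]
        linear_combination (3 - t) * (hpyth x)
      calc ‖T3' (1 - R) x‖ = Real.sqrt (‖T3' (1 - R) x‖ ^ 2) :=
            (Real.sqrt_sq (norm_nonneg _)).symm
      _ = Real.sqrt ((3 - t) * ‖T3' Q x‖ ^ 2) := by rw [hsq]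
      _ = Real.sqrt (3 - t) * ‖T3' Q x‖ := by
            rw [Real.sqrt_mul hKnn, Real.sqrt_sq (norm_nonneg _)]
    refine ⟨u, hun, ?_, ?_⟩
    · intro x
      rw [hnormA x]
      apply mul_le_mul_of_nonneg_left _ (Real.sqrt_nonneg _)
      have := hpyth x
      nlinarith [norm_nonneg (T3' Q x), norm_nonneg x, norm_nonneg (T3' P x)]
    · intro x
      rw [hnormA x]
      apply mul_le_mul_of_nonneg_left _ (Real.sqrt_nonneg _)
      have hinner : ⟪x, u⟫ = ⟪T3' Q x, u⟫ := by
        calc ⟪x, u⟫ = ⟪x, T3' Q u⟫ := by rw [hQu]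
        _ = ⟪T3' Q.transpose x, u⟫ := (Tadjt Q x u).symm
        _ = ⟪T3' Q x, u⟫ := by rw [hQsym]
      rw [hinner]
      calc |⟪T3' Q x, u⟫| ≤ ‖T3' Q x‖ * ‖u‖ := abs_real_inner_le_norm _ _
      _ = ‖T3' Q x‖ := by rw [hun, mul_one]

/-- For `A = I − R` with `R ∈ SO(3)` and `f : ℝ → ℝ³` bounded on a nonempty set
`I ⊆ [0,∞)`, `sup_{t∈I} ‖A f(t)‖ ≥ ‖A‖ · m(f:I)`. -/
theorem stmt13 (R : Matrix (Fin 3) (Fin 3) ℝ) (hR : R ∈ SO3)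
    (A : Matrix (Fin 3) (Fin 3) ℝ) (hA : A = 1 - R)
    (f : ℝ → EuclideanSpace ℝ (Fin 3)) (I : Set ℝ)
    (hne : I.Nonempty) (hI : I ⊆ Set.Ici (0 : ℝ))
    (hbdd : ∃ C, ∀ t ∈ I, ‖f t‖ ≤ C) :
    opNorm3 A * mEx f I ≤ ⨆ t : I, ‖Matrix.toEuclideanLin A (f t)‖ := by
  obtain ⟨h1, h2, h3⟩ := hR
  subst hA
  obtain ⟨u, hu, hle, hge⟩ := so3_key' R h1 h2 h3
  have hT : ∀ (B : Matrix (Fin 3) (Fin 3) ℝ) (x : EuclideanSpace ℝ (Fin 3)),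
      T3' B x = Matrix.toEuclideanLin B x := fun _ _ => rfl
  simp only [hT] at hle hge
  haveI : Nonempty I := hne.to_subtype
  obtain ⟨C, hC⟩ := hbdd
  have hop : (0:ℝ) ≤ opNorm3 (1 - R) := by unfold opNorm3; positivity
  have hA_le : opNorm3 (1 - R) ≤ Real.sqrt (3 - R.trace) := by
    unfold opNorm3
    apply ContinuousLinearMap.opNorm_le_bound _ (Real.sqrt_nonneg _)
    intro x
    simpa using hle x
  have hbddA : BddAbove (Set.range fun t : I => ‖Matrix.toEuclideanLin (1 - R) (f t)‖) := by
    refine ⟨Real.sqrt (3 - R.trace) * C, ?_⟩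
    rintro _ ⟨s, rfl⟩
    refine le_trans (hle (f s)) ?_
    exact mul_le_mul_of_nonneg_left (hC s s.2) (Real.sqrt_nonneg _)
  have hm : mEx f I ≤ ⨆ s : I, |⟪f s, u⟫| := by
    apply ciInf_le ⟨(0:ℝ), ?_⟩ (⟨u, hu⟩ : {x : EuclideanSpace ℝ (Fin 3) // ‖x‖ = 1})
    rintro _ ⟨v, rfl⟩
    exact Real.iSup_nonneg fun s => abs_nonneg _
  calc opNorm3 (1 - R) * mEx f I ≤ opNorm3 (1 - R) * ⨆ s : I, |⟪f s, u⟫| :=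
        mul_le_mul_of_nonneg_left hm hop
  _ = ⨆ s : I, opNorm3 (1 - R) * |⟪f s, u⟫| := Real.mul_iSup_of_nonneg hop _
  _ ≤ ⨆ s : I, ‖Matrix.toEuclideanLin (1 - R) (f s)‖ := by
      apply ciSup_mono hbddA
      intro s
      refine le_trans (mul_le_mul_of_nonneg_right hA_le (abs_nonneg _)) (hge (f s))
end

section
/- Let R_A ∈ SO(3), ε ≥ 0, and let ω_imu, ω_b, ω̃_b : ℝ → ℝ³ be differentiable with ω̃_b(t) = R_Aᵀ ω_b(t) + (I − R_Aᵀ) ω_imu(t) for all t. If ‖ω̇_b(t)‖ ≤ ε and ‖ω̇̃_b(t)‖ ≤ ε for all t ≥ 0, and ω̇_imu is bounded on [0,∞), then ‖I − R_A‖ · m(ω̇_imu : [0,∞)) ≤ 2ε. In particular, if m(ω̇_imu : [0,∞)) > 0, then ‖I − R_A‖ ≤ 2ε / m(ω̇_imu : [0,∞)). -/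
open scoped RealInnerProductSpace


lemma inner_toEuc (A : Matrix (Fin 3) (Fin 3) ℝ) (x y : EuclideanSpace ℝ (Fin 3)) :
    ⟪Matrix.toEuclideanLin A x, y⟫ = ⟪x, Matrix.toEuclideanLin A.transpose y⟫ := by
  have h : A.transpose = A.conjTranspose := by
    ext i j; simp [Matrix.conjTranspose_apply]
  rw [h, Matrix.toEuclideanLin_conjTranspose_eq_adjoint, LinearMap.adjoint_inner_right]

lemma toEuc_mul (A B : Matrix (Fin 3) (Fin 3) ℝ) (x : EuclideanSpace ℝ (Fin 3)) :
    Matrix.toEuclideanLin A (Matrix.toEuclideanLin B x) = Matrix.toEuclideanLin (A * B) x := by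
  simp [Matrix.toEuclideanLin_apply, Matrix.mulVec_mulVec]

lemma toEuc_one (x : EuclideanSpace ℝ (Fin 3)) :
    Matrix.toEuclideanLin (1 : Matrix (Fin 3) (Fin 3) ℝ) x = x := by
  simp [Matrix.toEuclideanLin_apply, Matrix.one_mulVec]

lemma norm_toEuc_orth (R : Matrix (Fin 3) (Fin 3) ℝ) (h : R * R.transpose = 1)
    (v : EuclideanSpace ℝ (Fin 3)) : ‖Matrix.toEuclideanLin R.transpose v‖ = ‖v‖ := by
  have h1 : ⟪Matrix.toEuclideanLin R.transpose v, Matrix.toEuclideanLin R.transpose v⟫ = ⟪v, v⟫ := by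
    rw [inner_toEuc, toEuc_mul]
    have : R.transpose.transpose * R.transpose = 1 := by rwa [Matrix.transpose_transpose]
    rw [this, toEuc_one]
  have h2 := real_inner_self_eq_norm_sq (Matrix.toEuclideanLin R.transpose v)
  have h3 := real_inner_self_eq_norm_sq v
  nlinarith [norm_nonneg (Matrix.toEuclideanLin R.transpose v), norm_nonneg v]

/-- Constraint (1) of the main claim: with `ω̃_b(t) = R_Aᵀ ω_b(t) + (I − R_Aᵀ) ω_imu(t)`,
if `‖ω̇_b(t)‖ ≤ ε` and `‖ω̇̃_b(t)‖ ≤ ε` for all `t ≥ 0` and `ω̇_imu` is bounded on `[0,∞)`,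
then `‖I − R_A‖ · m(ω̇_imu : [0,∞)) ≤ 2ε`; in particular, if `m(ω̇_imu : [0,∞)) > 0` then
`‖I − R_A‖ ≤ 2ε / m(ω̇_imu : [0,∞))`. -/
theorem stmt17 (RA : Matrix (Fin 3) (Fin 3) ℝ) (hRA : RA ∈ SO3) (ε : ℝ) (hε : 0 ≤ ε)
    (ωimu ωb ωtb ωimu' ωb' ωtb' : ℝ → EuclideanSpace ℝ (Fin 3))
    (hrel : ∀ t, ωtb t = Matrix.toEuclideanLin RA.transpose (ωb t)
        + Matrix.toEuclideanLin (1 - RA.transpose) (ωimu t))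
    (hdimu : ∀ t, HasDerivAt ωimu (ωimu' t) t)
    (hdb : ∀ t, HasDerivAt ωb (ωb' t) t)
    (hdtb : ∀ t, HasDerivAt ωtb (ωtb' t) t)
    (hb : ∀ t ≥ (0 : ℝ), ‖ωb' t‖ ≤ ε) (htb : ∀ t ≥ (0 : ℝ), ‖ωtb' t‖ ≤ ε)
    (hbdd : ∃ C, ∀ t ≥ (0 : ℝ), ‖ωimu' t‖ ≤ C) :
    opNorm3 (1 - RA) * mEx ωimu' (Set.Ici 0) ≤ 2 * ε ∧
    (0 < mEx ωimu' (Set.Ici 0) →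
      opNorm3 (1 - RA) ≤ 2 * ε / mEx ωimu' (Set.Ici 0)) := by

  obtain ⟨hRA1, hRA2, _⟩ := hRA
  set m := mEx ωimu' (Set.Ici 0) with hm
  have hm0 : 0 ≤ m := Real.iInf_nonneg fun x => Real.iSup_nonneg fun t => abs_nonneg _
  haveI : Nonempty (Set.Ici (0:ℝ)) := ⟨⟨0, Set.self_mem_Ici⟩⟩
  -- derivative identity
  have hder : ∀ t, ωtb' t = Matrix.toEuclideanLin RA.transpose (ωb' t)
      + Matrix.toEuclideanLin (1 - RA.transpose) (ωimu' t) := by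
    intro t
    set L := LinearMap.toContinuousLinearMap (Matrix.toEuclideanLin RA.transpose)
    set M := LinearMap.toContinuousLinearMap (Matrix.toEuclideanLin (1 - RA.transpose))
    have h1 : HasDerivAt (fun s => L (ωb s) + M (ωimu s)) (L (ωb' t) + M (ωimu' t)) t :=
      ((L.hasFDerivAt.comp_hasDerivAt t (hdb t)).add
        (M.hasFDerivAt.comp_hasDerivAt t (hdimu t)))
    have h2 : (fun s => L (ωb s) + M (ωimu s)) = ωtb := by
      funext s; rw [hrel s]; rfl
    rw [h2] at h1
    exact (hdtb t).unique h1
  -- key bound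
  have hkey : ∀ t ≥ (0:ℝ), ‖Matrix.toEuclideanLin (1 - RA.transpose) (ωimu' t)‖ ≤ 2 * ε := by
    intro t ht
    have : Matrix.toEuclideanLin (1 - RA.transpose) (ωimu' t)
        = ωtb' t - Matrix.toEuclideanLin RA.transpose (ωb' t) := by
      rw [hder t]; abel
    rw [this]
    calc ‖ωtb' t - Matrix.toEuclideanLin RA.transpose (ωb' t)‖
        ≤ ‖ωtb' t‖ + ‖Matrix.toEuclideanLin RA.transpose (ωb' t)‖ := norm_sub_le _ _
      _ ≤ ε + ε := by
          refine add_le_add (htb t ht) ?_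
          rw [norm_toEuc_orth RA hRA2]; exact hb t ht
      _ = 2 * ε := by ring
  -- for every vector y
  have hkey2 : ∀ y : EuclideanSpace ℝ (Fin 3),
      ‖Matrix.toEuclideanLin (1 - RA) y‖ * m ≤ 2 * ε * ‖y‖ := by
    intro y
    set v := Matrix.toEuclideanLin (1 - RA) y with hv
    by_cases hv0 : v = 0
    · rw [hv0, norm_zero, zero_mul]; positivity
    · have hvn : (0:ℝ) < ‖v‖ := norm_pos_iff.mpr hv0
      set x0 : EuclideanSpace ℝ (Fin 3) := ‖v‖⁻¹ • v with hx0
      have hx0n : ‖x0‖ = 1 := by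
        rw [hx0, norm_smul, norm_inv, norm_norm, inv_mul_cancel₀ hvn.ne']
      have hmle : m ≤ ⨆ t : (Set.Ici (0:ℝ)), |⟪ωimu' t, x0⟫| := by
        rw [hm, mEx]
        exact ciInf_le ⟨0, Set.forall_mem_range.2
          fun z => Real.iSup_nonneg fun t => abs_nonneg _⟩ (⟨x0, hx0n⟩ : {x : EuclideanSpace ℝ (Fin 3) // ‖x‖ = 1})
      have hsup : (⨆ t : (Set.Ici (0:ℝ)), |⟪ωimu' t, x0⟫|) ≤ 2 * ε * ‖y‖ / ‖v‖ := by
        refine ciSup_le fun t => ?_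
        have ht0 : (0:ℝ) ≤ (t:ℝ) := t.2
        have hinner : ⟪(ωimu' t : EuclideanSpace ℝ (Fin 3)), v⟫
            = ⟪Matrix.toEuclideanLin (1 - RA.transpose) (ωimu' t), y⟫ := by
          rw [real_inner_comm, hv, inner_toEuc, real_inner_comm]
          congr 2
          rw [Matrix.transpose_sub, Matrix.transpose_one]
        have hb1 : |⟪(ωimu' t : EuclideanSpace ℝ (Fin 3)), v⟫| ≤ 2 * ε * ‖y‖ := by
          rw [hinner]
          calc |⟪Matrix.toEuclideanLin (1 - RA.transpose) (ωimu' t), y⟫|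
              ≤ ‖Matrix.toEuclideanLin (1 - RA.transpose) (ωimu' t)‖ * ‖y‖ :=
                abs_real_inner_le_norm _ _
            _ ≤ 2 * ε * ‖y‖ := by
                exact mul_le_mul_of_nonneg_right (hkey t ht0) (norm_nonneg y)
        rw [hx0, real_inner_smul_right, abs_mul, abs_inv, abs_norm]
        rw [div_eq_inv_mul]
        exact mul_le_mul_of_nonneg_left hb1 (inv_nonneg.mpr hvn.le)
      have := hmle.trans hsup
      calc ‖v‖ * m ≤ ‖v‖ * (2 * ε * ‖y‖ / ‖v‖) :=
            mul_le_mul_of_nonneg_left this hvn.le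
        _ = 2 * ε * ‖y‖ := by field_simp
  -- conclude
  have hmain : ∀ hmpos : 0 < m, opNorm3 (1 - RA) ≤ 2 * ε / m := by
    intro hmpos
    rw [opNorm3]
    refine ContinuousLinearMap.opNorm_le_bound _ (by positivity) fun y => ?_
    have h := hkey2 y
    rw [div_mul_eq_mul_div, le_div_iff₀ hmpos]
    simpa only [LinearMap.coe_toContinuousLinearMap'] using h
  constructor
  · rcases eq_or_lt_of_le hm0 with h0 | hmpos
    · rw [← h0, mul_zero]; positivity
    · have := hmain hmpos
      calc opNorm3 (1 - RA) * m ≤ (2 * ε / m) * m :=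
            mul_le_mul_of_nonneg_right this hm0
        _ = 2 * ε := by field_simp
  · exact hmain
end
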